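/- arXiv:1009.5339 — 2 statements merged into one kernel-verified Lean document; each statement's English description precedes it below -/
import Mathlib

section
/- Let F be any field. Every 3-dimensional nilpotent non-unital associative F-algebra is isomorphic to one of the following algebras, given by basis a, b, c and the listed nonzero products: A_{3,1} (all products zero); A_{3,2}: a² = b; A_{3,3}^α: a² = αc, b² = c, with α ∈ F, α ≠ 0; A_{3,4}^α: a² = αc, ab = c, b² = c, with α ∈ F; A_{3,5}: ab = c, ba = −c; A_{3,6}: a² = b, ab = ba = c. -/
/-- A (non-unital) algebra is nilpotent if there is `n ≥ 1` such that every product of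
`n` elements is zero. -/
def AlgNilpotent (A : Type*) [Mul A] [Zero A] : Prop :=
  ∃ n : ℕ, 0 < n ∧ ∀ (x : A) (l : List A), l.length + 1 = n → l.foldl (· * ·) x = 0

section Tables

variable {F A : Type*} [Field F] [NonUnitalRing A] [Module F A]

/-- `A_{3,2}` : `a² = b`, all other products of basis elements zero. -/
def IsA32Basis (v : Module.Basis (Fin 3) F A) : Prop :=
  v 0 * v 0 = v 1 ∧
  v 0 * v 1 = 0 ∧ v 1 * v 0 = 0 ∧ v 0 * v 2 = 0 ∧ v 2 * v 0 = 0 ∧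
  v 1 * v 1 = 0 ∧ v 1 * v 2 = 0 ∧ v 2 * v 1 = 0 ∧ v 2 * v 2 = 0

/-- `A_{3,3}^α` : `a² = αc`, `b² = c`, all other products of basis elements zero. -/
def IsA33Basis (α : F) (v : Module.Basis (Fin 3) F A) : Prop :=
  v 0 * v 0 = α • v 2 ∧ v 1 * v 1 = v 2 ∧
  v 0 * v 1 = 0 ∧ v 1 * v 0 = 0 ∧ v 0 * v 2 = 0 ∧ v 2 * v 0 = 0 ∧
  v 1 * v 2 = 0 ∧ v 2 * v 1 = 0 ∧ v 2 * v 2 = 0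

/-- `A_{3,4}^α` : `a² = αc`, `ab = c`, `b² = c`, all other products zero. -/
def IsA34Basis (α : F) (v : Module.Basis (Fin 3) F A) : Prop :=
  v 0 * v 0 = α • v 2 ∧ v 0 * v 1 = v 2 ∧ v 1 * v 1 = v 2 ∧
  v 1 * v 0 = 0 ∧ v 0 * v 2 = 0 ∧ v 2 * v 0 = 0 ∧
  v 1 * v 2 = 0 ∧ v 2 * v 1 = 0 ∧ v 2 * v 2 = 0

/-- `A_{3,5}` : `ab = c`, `ba = -c`, all other products zero. -/
def IsA35Basis (v : Module.Basis (Fin 3) F A) : Prop :=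
  v 0 * v 1 = v 2 ∧ v 1 * v 0 = -v 2 ∧
  v 0 * v 0 = 0 ∧ v 1 * v 1 = 0 ∧ v 0 * v 2 = 0 ∧ v 2 * v 0 = 0 ∧
  v 1 * v 2 = 0 ∧ v 2 * v 1 = 0 ∧ v 2 * v 2 = 0

/-- `A_{3,6}` : `a² = b`, `ab = ba = c`, all other products zero. -/
def IsA36Basis (v : Module.Basis (Fin 3) F A) : Prop :=
  v 0 * v 0 = v 1 ∧ v 0 * v 1 = v 2 ∧ v 1 * v 0 = v 2 ∧
  v 0 * v 2 = 0 ∧ v 2 * v 0 = 0 ∧ v 1 * v 1 = 0 ∧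
  v 1 * v 2 = 0 ∧ v 2 * v 1 = 0 ∧ v 2 * v 2 = 0

end Tables

/-! Write `A^k` for the span of the products of `k` elements. Nilpotency makes the chain
`A ⊇ A² ⊇ A³ ⊇ …` strictly decreasing until it reaches `0`, so `dim A² ≤ 2` and `A⁴ = 0`.

If `dim A² = 1` then `A³ = 0`, so `A²` annihilates `A` from both sides. When all squares
vanish, the multiplication is alternating and any `p, q` with `pq ≠ 0` give `A_{3,5}`.
Otherwise some `b²` spans `A²`; left multiplication by `b` has rank one, so its kernel
(of dimension at least two) contains some `a ∉ span {b, b²}`, and writing `a² = α b²`,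
`ab = γ b²` gives `A_{3,2}`, `A_{3,3}^α` or, after rescaling `a` by `γ⁻¹`, `A_{3,4}^α`.

If `dim A² = 2`, then `A = F a ⊕ A²` for any `a ∉ A²`. Expanding products shows
`A^k = F a^k + A^(k+1)`, so `a, a², a³` span `A`, which is `A_{3,6}`. -/

open Module Submodule Pointwise

section LowerPow

variable (R A : Type*) [Semiring R] [NonUnitalSemiring A] [Module R A]

/-- `lowerPow R A k` is `A^(k+1)`, indexed like `LieModule.lowerCentralSeries`. -/
def lowerPow : ℕ → Submodule R A
  | 0 => ⊤
  | k + 1 => span R ((lowerPow k : Set A) * Set.univ)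

variable {R A}

theorem mem_lowerPow_zero (x : A) : x ∈ lowerPow R A 0 := mem_top

theorem lowerPow_succ (k : ℕ) :
    lowerPow R A (k + 1) = span R ((lowerPow R A k : Set A) * Set.univ) := rfl

theorem mul_mem_lowerPow_succ {k : ℕ} {x : A} (hx : x ∈ lowerPow R A k) (y : A) :
    x * y ∈ lowerPow R A (k + 1) :=
  subset_span (Set.mul_mem_mul hx (Set.mem_univ y))

theorem lowerPow_succ_le (k : ℕ) : lowerPow R A (k + 1) ≤ lowerPow R A k := by
  induction k with
  | zero => exact le_top
  | succ k ih => exact span_mono (Set.mul_subset_mul_right ih)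

theorem lowerPow_antitone : Antitone (lowerPow R A) :=
  antitone_nat_of_succ_le lowerPow_succ_le

theorem lowerPow_one_eq_bot_iff : lowerPow R A 1 = ⊥ ↔ ∀ x y : A, x * y = 0 := by
  refine ⟨fun h x y => ?_, fun h => ?_⟩
  · simpa [h] using mul_mem_lowerPow_succ (mem_lowerPow_zero (R := R) x) y
  · rw [eq_bot_iff, lowerPow_succ, span_le]
    rintro _ ⟨x, -, y, -, rfl⟩
    exact h x y

theorem lowerPow_eq_bot_of_succ_eq {k : ℕ} (h : lowerPow R A (k + 1) = lowerPow R A k) (n : ℕ)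
    (hn : lowerPow R A n = ⊥) : lowerPow R A k = ⊥ := by
  have hconst : ∀ j, lowerPow R A (k + j) = lowerPow R A k := by
    intro j
    induction j with
    | zero => rfl
    | succ j ih => rw [← add_assoc, lowerPow_succ, ih, ← lowerPow_succ, h]
  rw [← hconst n, eq_bot_iff, ← hn]
  exact lowerPow_antitone (by omega)

section

variable [IsScalarTower R A A]

theorem lowerPow_le_span_foldl (k : ℕ) :
    lowerPow R A k ≤
      span R {z | ∃ (x : A) (l : List A), l.length = k ∧ l.foldl (· * ·) x = z} := by
  induction k with
  | zero => exact fun x _ => subset_span ⟨x, [], rfl, rfl⟩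
  | succ k ih =>
    rw [lowerPow_succ, span_le]
    rintro _ ⟨m, hm, n, -, rfl⟩
    dsimp only
    have hm' := ih hm
    clear hm
    induction hm' using span_induction with
    | mem _ h =>
      obtain ⟨x, l, rfl, rfl⟩ := h
      exact subset_span ⟨x, l ++ [n], by simp, by simp⟩
    | zero => simp
    | add _ _ _ _ h₁ h₂ => rw [add_mul]; exact add_mem h₁ h₂
    | smul r _ _ h => rw [smul_mul_assoc]; exact smul_mem _ r h

theorem AlgNilpotent.exists_lowerPow_eq_bot (hA : AlgNilpotent A) :
    ∃ n, lowerPow R A n = ⊥ := by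
  obtain ⟨n, hn, h⟩ := hA
  refine ⟨n - 1, eq_bot_iff.2 ((lowerPow_le_span_foldl _).trans (span_le.2 ?_))⟩
  rintro _ ⟨x, l, hl, rfl⟩
  simp [h x l (by omega)]

end

variable [SMulCommClass R A A]

theorem mul_mem_lowerPow {j k : ℕ} {x y : A} (hx : x ∈ lowerPow R A j)
    (hy : y ∈ lowerPow R A k) : x * y ∈ lowerPow R A (j + k + 1) := by
  induction k generalizing y with
  | zero => exact mul_mem_lowerPow_succ hx y
  | succ k ih =>
    induction hy using span_induction with
    | mem _ h =>
      obtain ⟨m, hm, n, -, rfl⟩ := h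
      rw [← mul_assoc]
      exact mul_mem_lowerPow_succ (ih hm) n
    | zero => simp
    | add _ _ _ _ h₁ h₂ => rw [mul_add]; exact add_mem h₁ h₂
    | smul r _ _ h => rw [mul_smul_comm]; exact smul_mem _ r h

variable [IsScalarTower R A A]

theorem lowerPow_succ_le_sup_span {a x : A} {k : ℕ}
    (ha : lowerPow R A 0 ≤ lowerPow R A 1 ⊔ R ∙ a) (hx : x ∈ lowerPow R A k)
    (hk : lowerPow R A k ≤ lowerPow R A (k + 1) ⊔ R ∙ x) :
    lowerPow R A (k + 1) ≤ lowerPow R A (k + 2) ⊔ R ∙ (x * a) := by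
  rw [lowerPow_succ k, span_le]
  rintro _ ⟨m, hm, n, -, rfl⟩
  dsimp only
  obtain ⟨p, hp, _, hs, rfl⟩ := mem_sup.1 (hk hm)
  obtain ⟨s, rfl⟩ := mem_span_singleton.1 hs
  obtain ⟨w, hw, _, ht, rfl⟩ := mem_sup.1 (ha (mem_lowerPow_zero n))
  obtain ⟨t, rfl⟩ := mem_span_singleton.1 ht
  have hxw : x * w ∈ lowerPow R A (k + 2) := mul_mem_lowerPow hx hw
  have hpa : p * a ∈ lowerPow R A (k + 2) := mul_mem_lowerPow_succ hp a
  have hpw : p * w ∈ lowerPow R A (k + 2) :=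
    lowerPow_succ_le _ (mul_mem_lowerPow (k := 1) hp hw)
  have hexp : (p + s • x) * (w + t • a) =
      (p * w + s • (x * w) + t • (p * a)) + t • s • (x * a) := by
    simp only [add_mul, mul_add, smul_mul_assoc, mul_smul_comm, smul_add]
    abel
  rw [hexp]
  exact add_mem (mem_sup_left (add_mem (add_mem hpw (smul_mem _ s hxw)) (smul_mem _ t hpa)))
    (mem_sup_right (smul_mem _ t (smul_mem _ s (mem_span_singleton_self _))))

end LowerPow

section Classification

variable {F A : Type*} [Field F] [NonUnitalRing A] [Module F A]

theorem finrank_lowerPow_succ_lt [SMulCommClass F A A] [IsScalarTower F A A]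
    [FiniteDimensional F A] (hA : AlgNilpotent A) {k : ℕ} (hk : lowerPow F A k ≠ ⊥) :
    finrank F (lowerPow F A (k + 1)) < finrank F (lowerPow F A k) := by
  obtain ⟨n, hn⟩ := hA.exists_lowerPow_eq_bot (R := F)
  exact Submodule.finrank_lt_finrank_of_lt
    ((lowerPow_succ_le k).lt_of_ne fun h => hk (lowerPow_eq_bot_of_succ_eq h n hn))

theorem finrank_lowerPow_le [SMulCommClass F A A] [IsScalarTower F A A]
    [FiniteDimensional F A] (hA : AlgNilpotent A) (k : ℕ) :
    finrank F (lowerPow F A k) ≤ finrank F A - k := by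
  induction k with
  | zero => exact Submodule.finrank_le _
  | succ k ih =>
    by_cases hk : lowerPow F A k = ⊥
    · rw [eq_bot_iff.2 ((lowerPow_succ_le k).trans hk.le), finrank_bot]
      exact Nat.zero_le _
    · have := finrank_lowerPow_succ_lt hA hk
      omega

theorem exists_isA35Basis [SMulCommClass F A A] [IsScalarTower F A A]
    (h3 : finrank F A = 3) (hmul3 : ∀ x y z : A, x * y * z = 0)
    (hsq : ∀ x : A, x * x = 0) {p q : A} (hpq : p * q ≠ 0) :
    ∃ v : Basis (Fin 3) F A, IsA35Basis v := by
  have hqp : q * p = -(p * q) := by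
    have h := hsq (p + q)
    rw [add_mul, mul_add, mul_add, hsq p, hsq q, zero_add, add_zero] at h
    exact eq_neg_of_add_eq_zero_right h
  have hli : LinearIndependent F ![p, q, p * q] := by
    rw [Fintype.linearIndependent_iff]
    intro g hg
    simp only [Fin.sum_univ_three, Matrix.cons_val_zero, Matrix.cons_val_one,
      Matrix.cons_val_two, Matrix.head_cons, Matrix.tail_cons] at hg
    have h0 : g 0 = 0 := by
      simpa [add_mul, smul_mul_assoc, hsq, hmul3, hpq] using congrArg (· * q) hg
    have h1 : g 1 = 0 := by
      simpa [mul_add, mul_smul_comm, hsq, ← mul_assoc, hmul3, hpq] using congrArg (p * ·) hg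
    have h2 : g 2 = 0 := by simpa [h0, h1, hpq] using hg
    intro i
    fin_cases i <;> assumption
  refine ⟨basisOfLinearIndependentOfCardEqFinrank hli (by simp [h3]), ?_⟩
  simp [IsA35Basis, hsq, hqp, ← mul_assoc, hmul3]

theorem exists_mul_eq_zero_notMem_span [SMulCommClass F A A] [IsScalarTower F A A]
    (h3 : 3 ≤ finrank F A) {b : A} (hb : b * b ≠ 0) (hbA : ∀ y : A, b * y ∈ F ∙ (b * b)) :
    ∃ a, b * a = 0 ∧ a ∉ span F (Set.range ![b, b * b]) := by
  have : FiniteDimensional F A := Module.finite_of_finrank_pos (by omega)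
  set L := LinearMap.mulLeft F b
  have hrange : finrank F (LinearMap.range L) ≤ 1 := by
    refine (Submodule.finrank_mono ?_).trans (finrank_span_singleton hb).le
    rintro _ ⟨y, rfl⟩
    exact hbA y
  have hker := LinearMap.finrank_range_add_finrank_ker L
  have hspan : finrank F (span F (Set.range ![b, b * b])) ≤ 2 :=
    finrank_range_le_card (R := F) ![b, b * b]
  by_contra! h
  have hle : LinearMap.ker L ≤ span F (Set.range ![b, b * b]) := fun a ha => h a ha
  exact hb ((Submodule.eq_of_le_of_finrank_le hle (by omega)).ge (subset_span ⟨0, rfl⟩))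

theorem exists_isA32Basis_or_isA33Basis_or_isA34Basis [SMulCommClass F A A]
    [IsScalarTower F A A] (h3 : finrank F A = 3) (hmul3 : ∀ x y z : A, x * y * z = 0) {b : A}
    (hb : b * b ≠ 0) (hmul : ∀ x y : A, x * y ∈ F ∙ (b * b)) :
    ∃ v : Basis (Fin 3) F A,
      IsA32Basis v ∨ (∃ α : F, α ≠ 0 ∧ IsA33Basis α v) ∨ ∃ α : F, IsA34Basis α v := by
  obtain ⟨a, hba, ha⟩ := exists_mul_eq_zero_notMem_span h3.ge hb (hmul b)
  have hpair : LinearIndependent F ![b, b * b] := by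
    refine LinearIndependent.pair_iff.2 fun s t hst => ?_
    have hs : s = 0 := by
      simpa [mul_add, mul_smul_comm, ← mul_assoc, hmul3, hb] using congrArg (b * ·) hst
    exact ⟨hs, by simpa [hs, hb] using hst⟩
  have hcard : Fintype.card (Fin 3) = finrank F A := by simp [h3]
  obtain ⟨α, hα⟩ := mem_span_singleton.1 (hmul a a)
  obtain ⟨γ, hγ⟩ := mem_span_singleton.1 (hmul a b)
  rcases ne_or_eq γ 0 with hγ0 | rfl
  · set a' := γ⁻¹ • a
    have ha' : a' ∉ span F (Set.range ![b, b * b]) := fun h =>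
      ha (by simpa [a', smul_smul, hγ0] using smul_mem _ γ h)
    have hli : LinearIndependent F ![a', b, b * b] := linearIndependent_finCons.2 ⟨hpair, ha'⟩
    refine ⟨basisOfLinearIndependentOfCardEqFinrank hli hcard,
      .inr (.inr ⟨γ⁻¹ * γ⁻¹ * α, ?_⟩)⟩
    simp [IsA34Basis, a', smul_mul_assoc, mul_smul_comm, ← hα, ← hγ, smul_smul, hγ0, hba,
      ← mul_assoc, hmul3]
  rcases ne_or_eq α 0 with hα0 | rfl
  · have hli : LinearIndependent F ![a, b, b * b] := linearIndependent_finCons.2 ⟨hpair, ha⟩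
    refine ⟨basisOfLinearIndependentOfCardEqFinrank hli hcard, .inr (.inl ⟨α, hα0, ?_⟩)⟩
    simp [IsA33Basis, ← hα, ← hγ, hba, ← mul_assoc, hmul3]
  · have hsnoc : ![b, b * b, a] = Fin.snoc ![b, b * b] a := by
      ext i
      fin_cases i <;> rfl
    have hli : LinearIndependent F ![b, b * b, a] :=
      hsnoc ▸ linearIndependent_finSnoc.2 ⟨hpair, ha⟩
    refine ⟨basisOfLinearIndependentOfCardEqFinrank hli hcard, .inl ?_⟩
    simp [IsA32Basis, ← hα, ← hγ, hba, ← mul_assoc, hmul3]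

theorem exists_isA36Basis [SMulCommClass F A A] [IsScalarTower F A A] (h3 : finrank F A = 3)
    (h2 : finrank F (lowerPow F A 1) = 2) (hA4 : lowerPow F A 3 = ⊥) :
    ∃ v : Basis (Fin 3) F A, IsA36Basis v := by
  have : FiniteDimensional F A := Module.finite_of_finrank_pos (by omega)
  have hne : lowerPow F A 1 ≠ ⊤ := fun h => by rw [h, finrank_top, h3] at h2; omega
  obtain ⟨a, -, ha⟩ := SetLike.exists_of_lt (lt_top_iff_ne_top.2 hne)
  have hgen : lowerPow F A 0 ≤ lowerPow F A 1 ⊔ F ∙ a := by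
    have : finrank F (A ⧸ lowerPow F A 1) = 1 := by
      have := Submodule.finrank_quotient_add_finrank (lowerPow F A 1)
      omega
    exact ((sup_span_singleton_eq_top_iff ha).2 this).ge
  have hgen2 := lowerPow_succ_le_sup_span hgen (mem_lowerPow_zero a) hgen
  have hgen3 :=
    lowerPow_succ_le_sup_span hgen (mul_mem_lowerPow_succ (mem_lowerPow_zero a) a) hgen2
  have hspan : ⊤ ≤ span F (Set.range ![a, a * a, a * a * a]) :=
    calc ⊤ = lowerPow F A 0 := rfl
      _ ≤ lowerPow F A 3 ⊔ F ∙ (a * a * a) ⊔ F ∙ (a * a) ⊔ F ∙ a :=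
        hgen.trans (sup_le_sup_right (hgen2.trans (sup_le_sup_right hgen3 _)) _)
      _ = span F (Set.range ![a, a * a, a * a * a]) := by
        simp only [hA4, bot_sup_eq, Matrix.range_cons, Matrix.range_empty, Set.union_empty,
          span_union]
        ac_rfl
  have ha4 : a * a * a * a = 0 := by
    simpa [hA4] using mul_mem_lowerPow_succ
      (mul_mem_lowerPow_succ (mul_mem_lowerPow_succ (mem_lowerPow_zero (R := F) a) a) a) a
  have hli := linearIndependent_of_top_le_span_of_card_eq_finrank hspan (by simp [h3])
  refine ⟨basisOfLinearIndependentOfCardEqFinrank hli (by simp [h3]), ?_⟩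
  simp [IsA36Basis, ← mul_assoc, ha4]

theorem exists_basis_of_finrank_lowerPow_one_eq_one [SMulCommClass F A A]
    [IsScalarTower F A A] (h3 : finrank F A = 3) (h1 : finrank F (lowerPow F A 1) = 1)
    (hbot : lowerPow F A 2 = ⊥) :
    ∃ v : Basis (Fin 3) F A, IsA32Basis v ∨ (∃ α : F, α ≠ 0 ∧ IsA33Basis α v) ∨
      (∃ α : F, IsA34Basis α v) ∨ IsA35Basis v := by
  have hmul3 : ∀ x y z : A, x * y * z = 0 := fun x y z => by
    simpa [hbot] using
      mul_mem_lowerPow_succ (mul_mem_lowerPow_succ (mem_lowerPow_zero (R := F) x) y) z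
  by_cases hsq : ∀ x : A, x * x = 0
  · obtain ⟨p, q, hpq⟩ : ∃ p q : A, p * q ≠ 0 := by
      by_contra! h
      rw [lowerPow_one_eq_bot_iff.2 h, finrank_bot] at h1
      omega
    obtain ⟨v, hv⟩ := exists_isA35Basis h3 hmul3 hsq hpq
    exact ⟨v, .inr (.inr (.inr hv))⟩
  · obtain ⟨b, hb⟩ := not_forall.1 hsq
    have : FiniteDimensional F A := Module.finite_of_finrank_pos (by omega)
    have hbb : F ∙ (b * b) = lowerPow F A 1 :=
      eq_of_le_of_finrank_le
        ((span_singleton_le_iff_mem _ _).2 (mul_mem_lowerPow_succ (mem_lowerPow_zero b) b))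
        (by rw [h1, finrank_span_singleton hb])
    obtain ⟨v, hv⟩ := exists_isA32Basis_or_isA33Basis_or_isA34Basis h3 hmul3 hb
      fun x y => hbb ▸ mul_mem_lowerPow_succ (mem_lowerPow_zero x) y
    exact ⟨v, hv.imp_right (.imp_right .inl)⟩

end Classification

/-- Every 3-dimensional nilpotent non-unital associative algebra over a field `F` is
isomorphic to one of `A_{3,1}` (zero multiplication), `A_{3,2}`, `A_{3,3}^α` (`α ≠ 0`),
`A_{3,4}^α`, `A_{3,5}`, `A_{3,6}`. -/
theorem stmt11 {F A : Type*} [Field F]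
    [NonUnitalRing A] [Module F A] [SMulCommClass F A A] [IsScalarTower F A A]
    (h3 : Module.finrank F A = 3) (hnil : AlgNilpotent A) :
    ∃ v : Module.Basis (Fin 3) F A,
      (∀ x y : A, x * y = 0) ∨
      IsA32Basis v ∨
      (∃ α : F, α ≠ 0 ∧ IsA33Basis α v) ∨
      (∃ α : F, IsA34Basis α v) ∨
      IsA35Basis v ∨
      IsA36Basis v := by
  have : FiniteDimensional F A := Module.finite_of_finrank_pos (by omega)
  have hdim (k : ℕ) : finrank F (lowerPow F A k) ≤ 3 - k := h3 ▸ finrank_lowerPow_le hnil k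
  obtain h0 | h1 | h2 : finrank F (lowerPow F A 1) = 0 ∨ finrank F (lowerPow F A 1) = 1 ∨
      finrank F (lowerPow F A 1) = 2 := by
    have := hdim 1
    omega
  · exact ⟨finBasisOfFinrankEq F A h3, .inl (lowerPow_one_eq_bot_iff.1 (finrank_eq_zero.1 h0))⟩
  · have hbot : lowerPow F A 2 = ⊥ := by
      have : finrank F (lowerPow F A 2) < finrank F (lowerPow F A 1) :=
        finrank_lowerPow_succ_lt hnil fun h => by rw [h, finrank_bot] at h1; omega
      exact finrank_eq_zero.1 (by omega)
    obtain ⟨v, hv⟩ := exists_basis_of_finrank_lowerPow_one_eq_one h3 h1 hbot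
    exact ⟨v, .inr (hv.imp_right (.imp_right (.imp_right .inl)))⟩
  · obtain ⟨v, hv⟩ := exists_isA36Basis h3 h2 (finrank_eq_zero.1 (Nat.le_zero.1 (hdim 3)))
    exact ⟨v, .inr (.inr (.inr (.inr (.inr hv))))⟩
end

section
/- Let F be a finite field of characteristic 2. Then for every α ∈ F the 4-dimensional commutative non-unital associative F-algebra A_{4,5}^α with basis a, b, c, d and nonzero products a² = αc, ab = ba = d, b² = c is isomorphic to A_{4,5}^0. More generally, A_{4,5}^α ≅ A_{4,5}^β if and only if there exist u, v, x, y ∈ F with uy + vx ≠ 0 and α·(x²β + u²) = y²β + v². -/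
/-- The multiplication table of `A_{4,5}^α` (characteristic 2 form) on a basis
`a = v 0`, `b = v 1`, `c = v 2`, `d = v 3`: `a² = αc`, `ab = ba = d`, `b² = c`,
all other products of basis elements zero. -/
def IsA45Basis {F A : Type*} [Field F] [NonUnitalRing A] [Module F A]
    (α : F) (v : Module.Basis (Fin 4) F A) : Prop :=
  v 0 * v 0 = α • v 2 ∧ v 0 * v 1 = v 3 ∧ v 1 * v 0 = v 3 ∧ v 1 * v 1 = v 2 ∧
  v 0 * v 2 = 0 ∧ v 0 * v 3 = 0 ∧ v 1 * v 2 = 0 ∧ v 1 * v 3 = 0 ∧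
  v 2 * v 0 = 0 ∧ v 2 * v 1 = 0 ∧ v 2 * v 2 = 0 ∧ v 2 * v 3 = 0 ∧
  v 3 * v 0 = 0 ∧ v 3 * v 1 = 0 ∧ v 3 * v 2 = 0 ∧ v 3 * v 3 = 0

/-!
In characteristic 2 the substitution `a ↦ a + γb`, `d ↦ d + γc` (an involution) turns the
multiplication table of `A_{4,5}^β` into that of `A_{4,5}^{β+γ²}`, because
`(a + γb)² = a² + γ²b²`. In a finite field of characteristic 2 every element is a square, so all
`A_{4,5}^α` are isomorphic; in particular both sides of the equivalence always hold, the right one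
with `(u, t, x, y) = (1, √(α + β), 0, 1)`.
-/

theorem LinearMap.map_mul_of_map_mul_basis {R A B ι : Type*} [CommSemiring R]
    [NonUnitalNonAssocSemiring A] [Module R A] [SMulCommClass R A A] [IsScalarTower R A A]
    [NonUnitalNonAssocSemiring B] [Module R B] [SMulCommClass R B B] [IsScalarTower R B B]
    (f : A →ₗ[R] B) (v : Module.Basis ι R A) (h : ∀ i j, f (v i * v j) = f (v i) * f (v j))
    (x y : A) : f (x * y) = f x * f y := by
  have hbilin : (LinearMap.mul R A).compr₂ f = (LinearMap.mul R B).compl₁₂ f f :=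
    v.ext fun i => v.ext fun j => by simpa using h i j
  simpa using LinearMap.congr_fun₂ hbilin x y

namespace IsA45Basis

variable {F A B : Type*} [Field F]
  [NonUnitalRing A] [Module F A] [SMulCommClass F A A] [IsScalarTower F A A]
  [NonUnitalRing B] [Module F B] [SMulCommClass F B B] [IsScalarTower F B B]

theorem exists_mulEquiv {α : F} {v : Module.Basis (Fin 4) F A} {w : Module.Basis (Fin 4) F B}
    (hv : IsA45Basis α v) (hw : IsA45Basis α w) :
    ∃ e : A ≃ₗ[F] B, ∀ x y : A, e (x * y) = e x * e y := by
  obtain ⟨hv00, hv01, hv10, hv11, hv02, hv03, hv12, hv13,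
    hv20, hv21, hv22, hv23, hv30, hv31, hv32, hv33⟩ := hv
  obtain ⟨hw00, hw01, hw10, hw11, hw02, hw03, hw12, hw13,
    hw20, hw21, hw22, hw23, hw30, hw31, hw32, hw33⟩ := hw
  refine ⟨v.equiv w (.refl _), LinearMap.map_mul_of_map_mul_basis _ v fun i j => ?_⟩
  fin_cases i <;> fin_cases j <;>
    simp [hv00, hv01, hv10, hv11, hv02, hv03, hv12, hv13,
      hv20, hv21, hv22, hv23, hv30, hv31, hv32, hv33,
      hw00, hw01, hw10, hw11, hw02, hw03, hw12, hw13,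
      hw20, hw21, hw22, hw23, hw30, hw31, hw32, hw33]

theorem exists_add_sq [CharP F 2] {β : F} {w : Module.Basis (Fin 4) F B}
    (hw : IsA45Basis β w) (γ : F) : ∃ w' : Module.Basis (Fin 4) F B, IsA45Basis (β + γ ^ 2) w' := by
  obtain ⟨hw00, hw01, hw10, hw11, hw02, hw03, hw12, hw13,
    hw20, hw21, hw22, hw23, hw30, hw31, hw32, hw33⟩ := hw
  obtain ⟨φ, hφ⟩ : ∃ φ : B →ₗ[F] B, ∀ i, φ (w i) = ![w 0 + γ • w 1, w 1, w 2, w 3 + γ • w 2] i :=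
    ⟨_, w.constr_basis F _⟩
  have hφφ : φ ∘ₗ φ = LinearMap.id := by
    refine w.ext fun i => ?_
    fin_cases i <;> simp [hφ, add_assoc, ← add_smul, CharTwo.add_self_eq_zero]
  refine ⟨w.map (LinearEquiv.ofLinearMap φ φ hφφ hφφ), ?_⟩
  simp only [IsA45Basis, Module.Basis.map_apply, LinearEquiv.coe_ofLinearMap, hφ, Fin.isValue,
    Matrix.cons_val_zero, Matrix.cons_val_one, Matrix.cons_val, mul_add, add_mul, smul_add,
    smul_mul_assoc, mul_smul_comm, smul_smul, smul_zero, add_zero, and_self, and_true,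
    hw00, hw01, hw10, hw11, hw02, hw03, hw12, hw13, hw20, hw21, hw22, hw23, hw30, hw31, hw32, hw33]
  match_scalars <;> simp [sq, CharTwo.add_self_eq_zero]

end IsA45Basis

/-- Over a finite field of characteristic 2: `A_{4,5}^α ≅ A_{4,5}^β` iff there are
`u, v, x, y ∈ F` with `uy + vx ≠ 0` and `α(x²β + u²) = y²β + v²`; in particular every
`A_{4,5}^α` is isomorphic to `A_{4,5}^0`. -/
theorem stmt18 {F : Type} [Field F] [Fintype F] (hchar : ringChar F = 2)
    {A B : Type*}
    [NonUnitalRing A] [Module F A] [SMulCommClass F A A] [IsScalarTower F A A]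
    [NonUnitalRing B] [Module F B] [SMulCommClass F B B] [IsScalarTower F B B]
    (α β : F)
    (v : Module.Basis (Fin 4) F A) (w : Module.Basis (Fin 4) F B)
    (hv : IsA45Basis α v) (hw : IsA45Basis β w) :
    ((∃ e : A ≃ₗ[F] B, ∀ x y : A, e (x * y) = e x * e y) ↔
        ∃ u t x y : F, u * y + t * x ≠ 0 ∧
          α * (x ^ 2 * β + u ^ 2) = y ^ 2 * β + t ^ 2) ∧
    (β = 0 → ∃ e : A ≃ₗ[F] B, ∀ x y : A, e (x * y) = e x * e y) := by
  have : CharP F 2 := ringChar.eq_iff.mp hchar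
  obtain ⟨γ, hγ⟩ := FiniteField.isSquare_of_char_two hchar (α + β)
  have hα : β + γ ^ 2 = α := by linear_combination -hγ + β * CharTwo.two_eq_zero (R := F)
  obtain ⟨w', hw'⟩ := hw.exists_add_sq γ
  obtain ⟨e, he⟩ := hv.exists_mulEquiv (hα ▸ hw')
  refine ⟨⟨fun _ => ⟨1, γ, 0, 1, by simp, ?_⟩, fun _ => ⟨e, he⟩⟩, fun _ => ⟨e, he⟩⟩
  linear_combination -hα
end
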